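/- Let V_d = ℂ² ⊗ ℂ[z]/(z^{d+1}) be the vector representation of 𝔤_d = 𝔰𝔩₂ ⊗ ℂ[z]/(z^{d+1}). Let x ∈ V_d with n = min.deg x ≤ d, and let ξ ∈ 𝔤_d be any element annihilating x with nonzero constant coefficient ξ₀. Then the stabilizer subalgebra 𝔤_d^x = {η ∈ 𝔤_d : η.x = 0} equals ℂ[z]·ξ + z^{d+1−n}·𝔤_d; in particular dim_ℂ 𝔤_d^x = (d + 1 − n) + 3n. -/

import Mathlib

open Polynomial

/-- `R = ℂ[z]/(z^{d+1})`, the truncated polynomial algebra. -/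
noncomputable abbrev Rtc (d : ℕ) := Polynomial ℂ ⧸ Ideal.span {(X : Polynomial ℂ) ^ (d + 1)}

/-- the class of `z` in `ℂ[z]/(z^{d+1})`. -/
noncomputable def zz (d : ℕ) : Rtc d := Ideal.Quotient.mk _ X

/-- `η ↦ η.mulVec x`, linear in the matrix `η`. -/
noncomputable def mulVecRight (d : ℕ) (x : Fin 2 → Rtc d) :
    Matrix (Fin 2) (Fin 2) (Rtc d) →ₗ[Rtc d] (Fin 2 → Rtc d) where
  toFun A := A.mulVec x
  map_add' A B := Matrix.add_mulVec A B x
  map_smul' c A := by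
    simp only [RingHom.id_apply]
    exact Matrix.smul_mulVec c A x

/-- The stabilizer subalgebra `𝔤_d^x` of `x` in `𝔤_d = 𝔰𝔩₂ ⊗ ℂ[z]/(z^{d+1})`, as a
`ℂ`-submodule of the `2×2` matrices over `ℂ[z]/(z^{d+1})`. -/
noncomputable def stabx (d : ℕ) (x : Fin 2 → Rtc d) :
    Submodule ℂ (Matrix (Fin 2) (Fin 2) (Rtc d)) :=
  Submodule.restrictScalars ℂ
    (LinearMap.ker (Matrix.traceLinearMap (Fin 2) (Rtc d) (Rtc d)) ⊓
      LinearMap.ker (mulVecRight d x))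

/-!
Write `x = zⁿ • y`; minimality of `n` makes `y` unimodular, `p * y 0 + q * y 1 = 1`. Then `η x = 0`
iff `η y ≡ 0 mod z^(d+1-n)`, and for traceless `η` this holds iff `η ≡ f • N(y)` modulo
`z^(d+1-n)`, where `N(y) = y ⊗ (y 1, -y 0)`. The coefficient of `ξ` along `N(y)` is a unit because
`ξ ∉ z 𝔤_d`, so `N(y)` may be replaced by `ξ`.

For the dimension, unimodularity makes `η ↦ (tr η, η y)` surjective onto `R × R²`, and `𝔤_d^x` is
the kernel of its composite with `(t, w) ↦ (t, zⁿ w)`. The kernel of `zⁿ` on `R = ℂ[z]/(z^(d+1))`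
has dimension `n`, so rank–nullity gives `4(d+1) - 3(d+1) + 2n`.
-/

open Matrix Module LinearMap

section FinrankKer

variable {K V W U X : Type*} [Field K] [AddCommGroup V] [Module K V] [AddCommGroup W] [Module K W]
  [AddCommGroup U] [Module K U] [AddCommGroup X] [Module K X]

theorem finrank_ker_comp_of_surjective [FiniteDimensional K V] [FiniteDimensional K W]
    (f : V →ₗ[K] W) (g : W →ₗ[K] U) (hf : Function.Surjective f) :
    finrank K (ker (g ∘ₗ f)) + finrank K W = finrank K V + finrank K (ker g) := by
  have hgf := (g ∘ₗ f).finrank_range_add_finrank_ker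
  have hf' := f.finrank_range_add_finrank_ker
  have hg := g.finrank_range_add_finrank_ker
  rw [range_comp_of_range_eq_top g (range_eq_top.mpr hf)] at hgf
  rw [range_eq_top.mpr hf, finrank_top] at hf'
  omega

theorem finrank_ker_prodMap [FiniteDimensional K V] [FiniteDimensional K W] (f : V →ₗ[K] U)
    (g : W →ₗ[K] X) :
    finrank K (ker (f.prodMap g)) = finrank K (ker f) + finrank K (ker g) := by
  rw [ker_prodMap, ← (ker f).range_subtype, ← (ker g).range_subtype, ← range_prodMap,
    finrank_range_of_inj (Prod.map_injective.mpr ⟨(ker f).injective_subtype,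
      (ker g).injective_subtype⟩), finrank_prod, (ker f).range_subtype, (ker g).range_subtype]

theorem finrank_ker_compLeft [FiniteDimensional K V] (f : V →ₗ[K] W) (ι : Type*) [Fintype ι] :
    finrank K (ker (f.compLeft ι)) = Fintype.card ι * finrank K (ker f) := by
  rw [ker_compLeft, ← (ker f).range_subtype, ← range_compLeft,
    finrank_range_of_inj (Function.Injective.comp_left (ker f).injective_subtype),
    finrank_pi_fintype, Finset.sum_const, Finset.card_univ, smul_eq_mul, (ker f).range_subtype]

end FinrankKer

section UnimodularVector

variable {R : Type*} [CommRing R]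

/-- Over a field, `annMatrix y` spans the annihilator of `y ≠ 0` in `𝔰𝔩₂`. -/
def annMatrix (y : Fin 2 → R) : Matrix (Fin 2) (Fin 2) R := vecMulVec y ![y 1, -y 0]

theorem exists_eq_smul_annMatrix_add {y : Fin 2 → R} {p q : R} (hpq : p * y 0 + q * y 1 = 1)
    {η : Matrix (Fin 2) (Fin 2) R} (hη : η.trace = 0) {K : R} (hK : ∀ i, K ∣ (η *ᵥ y) i) :
    ∃ (f : R) (B : Matrix (Fin 2) (Fin 2) R),
      B.trace = 0 ∧ η = f • annMatrix y + K • B := by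
  obtain ⟨s, hs⟩ := hK 0
  obtain ⟨t, ht⟩ := hK 1
  simp only [mulVec, dotProduct, Fin.sum_univ_two] at hs ht
  have h11 : η 1 1 = -η 0 0 := by rw [trace_fin_two] at hη; linear_combination hη
  rw [h11] at ht
  -- `f = det (w, η w)` for `w = ![q, -p]`; for `η = annMatrix y` this is `(p * y 0 + q * y 1) ^ 2`.
  refine ⟨-p ^ 2 * η 0 1 + 2 * p * q * η 0 0 + q ^ 2 * η 1 0,
    !![p ^ 2 * y 0 * s - q ^ 2 * y 1 * t, (2 * p * q * y 0 + q ^ 2 * y 1) * s + q ^ 2 * y 0 * t;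
      p ^ 2 * y 1 * s + (p ^ 2 * y 0 + 2 * p * q * y 1) * t, -(p ^ 2 * y 0 * s - q ^ 2 * y 1 * t)],
    by simp [trace_fin_two], ?_⟩
  ext i j
  fin_cases i <;> fin_cases j <;>
    simp only [Fin.zero_eta, Fin.mk_one, Fin.isValue, h11, annMatrix, vecMulVec_cons, smul_cons,
      smul_eq_mul, smul_empty, smul_of, neg_mul, mul_neg, neg_sub, Matrix.add_apply, of_apply,
      Pi.smul_apply, cons_val_zero, cons_val_one, cons_val', cons_val_fin_one]
  · linear_combination p ^ 2 * y 0 * hs - q ^ 2 * y 1 * ht - η 0 0 * (p * y 0 + q * y 1 + 1) * hpq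
  · linear_combination (2 * p * q * y 0 + q ^ 2 * y 1) * hs + q ^ 2 * y 0 * ht
      - η 0 1 * (p * y 0 + q * y 1 + 1) * hpq
  · linear_combination p ^ 2 * y 1 * hs + (p ^ 2 * y 0 + 2 * p * q * y 1) * ht
      - η 1 0 * (p * y 0 + q * y 1 + 1) * hpq
  · linear_combination -(p ^ 2 * y 0 * hs - q ^ 2 * y 1 * ht
      - η 0 0 * (p * y 0 + q * y 1 + 1) * hpq)

theorem exists_trace_eq_and_mulVec_eq {y : Fin 2 → R} {p q : R} (hpq : p * y 0 + q * y 1 = 1)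
    (t : R) (w : Fin 2 → R) : ∃ η : Matrix (Fin 2) (Fin 2) R, η.trace = t ∧ η *ᵥ y = w := by
  obtain ⟨a, m, ha, hm⟩ : ∃ a m : R, a = w 0 - t * y 0 ∧ m = a * p + w 1 * q := ⟨_, _, rfl, rfl⟩
  refine ⟨!![t + a * p - m * q * y 1, a * q + m * q * y 0;
    w 1 * p + m * p * y 1, -(a * p - m * q * y 1)], by simp [trace_fin_two], ?_⟩
  ext i
  fin_cases i <;>
    simp only [mulVec, dotProduct, Fin.sum_univ_two, Fin.zero_eta, Fin.mk_one, Fin.isValue,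
      of_apply, cons_val', cons_val_fin_one, cons_val_zero, cons_val_one]
  · linear_combination a * hpq + ha
  · linear_combination (m * y 1 + w 1) * hpq + y 1 * hm

end UnimodularVector

namespace Rtc

variable {d : ℕ}

theorem zz_pow_eq_zero {k : ℕ} (hk : d + 1 ≤ k) : zz d ^ k = 0 := by
  obtain ⟨j, rfl⟩ := Nat.exists_eq_add_of_le hk
  rw [pow_add, zz, ← map_pow, Ideal.Quotient.eq_zero_iff_mem.mpr (Ideal.mem_span_singleton_self _),
    zero_mul]

theorem exists_eq_algebraMap_add_zz_mul (r : Rtc d) :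
    ∃ (c : ℂ) (s : Rtc d), r = algebraMap ℂ (Rtc d) c + zz d * s := by
  obtain ⟨p, rfl⟩ := Ideal.Quotient.mk_surjective r
  refine ⟨p.coeff 0, Ideal.Quotient.mk _ p.divX, ?_⟩
  conv_lhs => rw [← X_mul_divX_add p]
  rw [map_add, add_comm, zz, ← map_mul]
  rfl

theorem isUnit_or_exists_eq_zz_mul (r : Rtc d) : IsUnit r ∨ ∃ s, r = zz d * s := by
  obtain ⟨c, s, rfl⟩ := exists_eq_algebraMap_add_zz_mul r
  by_cases hc : c = 0
  · exact Or.inr ⟨s, by rw [hc, map_zero, zero_add]⟩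
  · have hnil : IsNilpotent (zz d * s) := ⟨d + 1, by rw [mul_pow, zz_pow_eq_zero le_rfl, zero_mul]⟩
    exact Or.inl (hnil.isUnit_add_left_of_commute ((Ne.isUnit hc).map _) (Commute.all _ _))

theorem exists_eq_zz_pow_mul_of_zz_pow_mul_eq_zero {k : ℕ} (hk : k ≤ d + 1) {r : Rtc d}
    (h : zz d ^ k * r = 0) : ∃ s, r = zz d ^ (d + 1 - k) * s := by
  obtain ⟨p, rfl⟩ := Ideal.Quotient.mk_surjective r
  rw [zz, ← map_pow, ← map_mul, Ideal.Quotient.eq_zero_iff_mem, Ideal.mem_span_singleton,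
    show d + 1 = k + (d + 1 - k) by omega, pow_add,
    mul_dvd_mul_iff_left (pow_ne_zero _ X_ne_zero)] at h
  obtain ⟨q, rfl⟩ := h
  exact ⟨Ideal.Quotient.mk _ q, by rw [map_mul, map_pow, zz]⟩

noncomputable def powerBasis (d : ℕ) : PowerBasis ℂ (Rtc d) :=
  AdjoinRoot.powerBasis (pow_ne_zero (d + 1) X_ne_zero)

instance : FiniteDimensional ℂ (Rtc d) := (powerBasis d).finite

theorem finrank_eq_add_one : finrank ℂ (Rtc d) = d + 1 := by
  rw [(powerBasis d).finrank]
  simp [powerBasis]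

theorem finrank_range_mulLeft_zz_pow_le {k : ℕ} (hk : k ≤ d + 1) :
    finrank ℂ (range (mulLeft ℂ (zz d ^ k))) ≤ d + 1 - k := by
  induction h : d + 1 - k generalizing k with
  | zero =>
    rw [show k = d + 1 by omega, zz_pow_eq_zero le_rfl, mulLeft_zero_eq_zero, range_zero,
      finrank_bot]
  | succ j ih =>
    have hle : range (mulLeft ℂ (zz d ^ k)) ≤
        ℂ ∙ zz d ^ k ⊔ range (mulLeft ℂ (zz d ^ (k + 1))) := by
      rintro _ ⟨r, rfl⟩
      obtain ⟨c, s, rfl⟩ := exists_eq_algebraMap_add_zz_mul r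
      refine Submodule.mem_sup.mpr ⟨c • zz d ^ k,
        Submodule.smul_mem _ _ (Submodule.mem_span_singleton_self _), zz d ^ (k + 1) * s,
        ⟨s, rfl⟩, ?_⟩
      rw [mulLeft_apply, Algebra.smul_def c (zz d ^ k)]
      ring
    calc finrank ℂ (range (mulLeft ℂ (zz d ^ k)))
        ≤ finrank ℂ (ℂ ∙ zz d ^ k) + finrank ℂ (range (mulLeft ℂ (zz d ^ (k + 1)))) :=
          (Submodule.finrank_mono hle).trans (Submodule.finrank_add_le_finrank_add_finrank _ _)
      _ ≤ 1 + j := add_le_add ((finrank_span_le_card ({zz d ^ k} : Set (Rtc d))).trans (by simp))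
          (ih (by omega) (by omega))
      _ = j + 1 := add_comm _ _

theorem ker_mulLeft_zz_pow {k : ℕ} (hk : k ≤ d + 1) :
    ker (mulLeft ℂ (zz d ^ k)) = range (mulLeft ℂ (zz d ^ (d + 1 - k))) := by
  ext r
  refine ⟨fun h => (exists_eq_zz_pow_mul_of_zz_pow_mul_eq_zero hk h).imp fun s hs => hs.symm, ?_⟩
  rintro ⟨s, rfl⟩
  rw [mem_ker, mulLeft_apply, mulLeft_apply, ← mul_assoc, ← pow_add, zz_pow_eq_zero (by omega),
    zero_mul]

theorem finrank_ker_mulLeft_zz_pow {k : ℕ} (hk : k ≤ d + 1) :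
    finrank ℂ (ker (mulLeft ℂ (zz d ^ k))) = k := by
  -- rank–nullity pairs `k` with `d + 1 - k`, and the two upper bounds force equality
  have h := (mulLeft ℂ (zz d ^ k)).finrank_range_add_finrank_ker
  rw [finrank_eq_add_one, ker_mulLeft_zz_pow hk] at h
  have h1 := finrank_range_mulLeft_zz_pow_le hk
  have h2 := finrank_range_mulLeft_zz_pow_le (d := d) (k := d + 1 - k) (by omega)
  rw [ker_mulLeft_zz_pow hk]
  omega

theorem exists_mul_add_mul_eq_one {y : Fin 2 → Rtc d} (hy : ¬∃ w, y = zz d • w) :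
    ∃ p q, p * y 0 + q * y 1 = 1 := by
  rcases isUnit_or_exists_eq_zz_mul (y 0) with ⟨u, hu⟩ | ⟨s, hs⟩
  · exact ⟨↑u⁻¹, 0, by rw [← hu, Units.inv_mul, zero_mul, add_zero]⟩
  rcases isUnit_or_exists_eq_zz_mul (y 1) with ⟨u, hu⟩ | ⟨t, ht⟩
  · exact ⟨0, ↑u⁻¹, by rw [← hu, Units.inv_mul, zero_mul, zero_add]⟩
  refine absurd ⟨![s, t], ?_⟩ hy
  ext i
  fin_cases i <;> simp [hs, ht]

theorem zz_pow_dvd_mulVec {k : ℕ} (hk : k ≤ d + 1) {η : Matrix (Fin 2) (Fin 2) (Rtc d)}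
    {y : Fin 2 → Rtc d} (h : η *ᵥ (zz d ^ k • y) = 0) (i : Fin 2) :
    zz d ^ (d + 1 - k) ∣ (η *ᵥ y) i := by
  rw [mulVec_smul] at h
  obtain ⟨s, hs⟩ := exists_eq_zz_pow_mul_of_zz_pow_mul_eq_zero hk (congrFun h i)
  exact ⟨s, hs⟩

theorem exists_eq_smul_add_zz_pow_smul {h : ℕ} (hh : h ≠ 0) {y : Fin 2 → Rtc d} {p q : Rtc d}
    (hpq : p * y 0 + q * y 1 = 1) {ξ η : Matrix (Fin 2) (Fin 2) (Rtc d)}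
    (hξtr : ξ.trace = 0) (hξy : ∀ i, zz d ^ h ∣ (ξ *ᵥ y) i) (hξ0 : ¬∃ B, ξ = zz d • B)
    (hηtr : η.trace = 0) (hηy : ∀ i, zz d ^ h ∣ (η *ᵥ y) i) :
    ∃ (f : Rtc d) (B : Matrix (Fin 2) (Fin 2) (Rtc d)),
      B.trace = 0 ∧ η = f • ξ + zz d ^ h • B := by
  obtain ⟨g, B₀, hB₀, hξ⟩ := exists_eq_smul_annMatrix_add hpq hξtr hξy
  obtain ⟨f, B₁, hB₁, hη⟩ := exists_eq_smul_annMatrix_add hpq hηtr hηy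
  obtain ⟨g', hg'⟩ : ∃ g', g * g' = 1 := by
    refine ((isUnit_or_exists_eq_zz_mul g).resolve_right ?_).exists_right_inv
    rintro ⟨s, rfl⟩
    refine hξ0 ⟨s • annMatrix y + zz d ^ (h - 1) • B₀, ?_⟩
    rw [hξ, smul_add, smul_smul, smul_smul, ← pow_succ',
      Nat.sub_add_cancel (Nat.one_le_iff_ne_zero.mpr hh)]
  refine ⟨f * g', B₁ - (f * g') • B₀,
    by rw [trace_sub, trace_smul, hB₀, hB₁, smul_zero, sub_zero], ?_⟩
  rw [hη, hξ]
  linear_combination (norm := module) -(f • hg') • annMatrix y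

theorem mem_stabx_iff {x : Fin 2 → Rtc d} {η : Matrix (Fin 2) (Fin 2) (Rtc d)} :
    η ∈ stabx d x ↔ η.trace = 0 ∧ η *ᵥ x = 0 :=
  Iff.rfl

theorem smul_add_zz_pow_smul_mem_stabx {n : ℕ} (hn : n ≤ d + 1) {y : Fin 2 → Rtc d}
    {ξ : Matrix (Fin 2) (Fin 2) (Rtc d)} (hξ : ξ ∈ stabx d (zz d ^ n • y)) (f : Rtc d)
    {B : Matrix (Fin 2) (Fin 2) (Rtc d)} (hB : B.trace = 0) :
    f • ξ + zz d ^ (d + 1 - n) • B ∈ stabx d (zz d ^ n • y) := by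
  obtain ⟨hξtr, hξx⟩ := mem_stabx_iff.mp hξ
  refine mem_stabx_iff.mpr
    ⟨by rw [trace_add, trace_smul, trace_smul, hξtr, hB, smul_zero, smul_zero, add_zero], ?_⟩
  rw [add_mulVec, smul_mulVec, smul_mulVec, hξx, mulVec_smul, smul_smul, ← pow_add,
    Nat.sub_add_cancel hn, zz_pow_eq_zero le_rfl]
  simp

theorem mem_stabx_iff_exists_eq_smul_add {n : ℕ} (hn : n ≤ d) {y : Fin 2 → Rtc d} {p q : Rtc d}
    (hpq : p * y 0 + q * y 1 = 1) {ξ : Matrix (Fin 2) (Fin 2) (Rtc d)}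
    (hξ : ξ ∈ stabx d (zz d ^ n • y)) (hξ0 : ¬∃ B, ξ = zz d • B)
    (η : Matrix (Fin 2) (Fin 2) (Rtc d)) :
    η ∈ stabx d (zz d ^ n • y) ↔ ∃ (f : Rtc d) (B : Matrix (Fin 2) (Fin 2) (Rtc d)),
      B.trace = 0 ∧ η = f • ξ + zz d ^ (d + 1 - n) • B := by
  obtain ⟨hξtr, hξx⟩ := mem_stabx_iff.mp hξ
  refine ⟨fun hη => ?_, fun ⟨f, B, hB, hη⟩ =>
    hη ▸ smul_add_zz_pow_smul_mem_stabx (by omega) hξ f hB⟩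
  obtain ⟨hηtr, hηx⟩ := mem_stabx_iff.mp hη
  exact exists_eq_smul_add_zz_pow_smul (by omega) hpq hξtr (zz_pow_dvd_mulVec (by omega) hξx)
    hξ0 hηtr (zz_pow_dvd_mulVec (by omega) hηx)

theorem finrank_stabx {n : ℕ} (hn : n ≤ d + 1) {y : Fin 2 → Rtc d} {p q : Rtc d}
    (hpq : p * y 0 + q * y 1 = 1) :
    finrank ℂ (stabx d (zz d ^ n • y)) = (d + 1 - n) + 3 * n := by
  let Ψ : Matrix (Fin 2) (Fin 2) (Rtc d) →ₗ[ℂ] Rtc d × (Fin 2 → Rtc d) :=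
    ((traceLinearMap (Fin 2) (Rtc d) (Rtc d)).prod (mulVecRight d y)).restrictScalars ℂ
  let Θ := (LinearMap.id : Rtc d →ₗ[ℂ] Rtc d).prodMap ((mulLeft ℂ (zz d ^ n)).compLeft (Fin 2))
  have hΨ : Function.Surjective Ψ := fun ⟨t, w⟩ =>
    (exists_trace_eq_and_mulVec_eq hpq t w).imp fun η hη => Prod.ext hη.1 hη.2
  have hstab : stabx d (zz d ^ n • y) = ker (Θ ∘ₗ Ψ) := by
    ext η
    simp [stabx, Θ, Ψ, mulVecRight, mulVec_smul, funext_iff]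
  have h := finrank_ker_comp_of_surjective Ψ Θ hΨ
  rw [← hstab, finrank_ker_prodMap, finrank_ker_compLeft, finrank_ker_mulLeft_zz_pow hn,
    ker_id, finrank_bot, finrank_matrix, finrank_prod, finrank_pi_fintype] at h
  simp only [Fintype.card_fin, finrank_eq_add_one, Finset.sum_const, Finset.card_univ,
    smul_eq_mul] at h
  omega

end Rtc

open Rtc in
theorem stmt4 (d n : ℕ) (hn : n ≤ d) (x : Fin 2 → Rtc d)
    (hdiv : ∃ y, x = (zz d) ^ n • y)
    (hndiv : ¬∃ y, x = (zz d) ^ (n + 1) • y)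
    (ξ : Matrix (Fin 2) (Fin 2) (Rtc d))
    (hξtr : ξ.trace = 0) (hξx : ξ.mulVec x = 0)
    (hξ0 : ¬∃ B, ξ = (zz d) • B) :
    (∀ η : Matrix (Fin 2) (Fin 2) (Rtc d),
      (η.trace = 0 ∧ η.mulVec x = 0) ↔
        ∃ (f : Rtc d) (B : Matrix (Fin 2) (Fin 2) (Rtc d)),
          B.trace = 0 ∧ η = f • ξ + (zz d) ^ (d + 1 - n) • B) ∧
    Module.finrank ℂ (stabx d x) = (d + 1 - n) + 3 * n := by
  obtain ⟨y, rfl⟩ := hdiv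
  obtain ⟨p, q, hpq⟩ : ∃ p q, p * y 0 + q * y 1 = 1 :=
    exists_mul_add_mul_eq_one fun ⟨w, hw⟩ => hndiv ⟨w, by rw [hw, smul_smul, ← pow_succ]⟩
  have hξ : ξ ∈ stabx d (zz d ^ n • y) := mem_stabx_iff.mpr ⟨hξtr, hξx⟩
  exact ⟨fun η => mem_stabx_iff.symm.trans (mem_stabx_iff_exists_eq_smul_add hn hpq hξ hξ0 η),
    finrank_stabx (by omega) hpq⟩
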